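/- Let g : ℝ≥0 → ℝ be continuous, differentiable on (0,∞), with g(0) ≥ 0 and g'(t) ≥ 0 for all t where g(t) ≤ 0. Then g(t) ≥ 0 cannot fail: there is no t > 0 with g(t) < 0, under the additional assumption that g(0) > 0. -/
import Mathlib


theorem barrier_lemma_zero (g : ℝ → ℝ)
    (hdiff : Differentiable ℝ g)
    (h0 : g 0 > 0)
    (hbar : ∀ t : ℝ, 0 ≤ t → g t ≤ 0 → deriv g t ≥ 0) :
    ∀ t : ℝ, 0 ≤ t → 0 ≤ g t := by
  intro t ht
  by_contra hneg
  push_neg at hneg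
  set S : Set ℝ := {u | u ∈ Set.Icc 0 t ∧ 0 ≤ g u} with hS
  have hSne : S.Nonempty := ⟨0, ⟨le_refl 0, ht⟩, h0.le⟩
  have hSbdd : BddAbove S := ⟨t, fun u hu => hu.1.2⟩
  have hSclosed : IsClosed S := by
    have : S = Set.Icc 0 t ∩ g ⁻¹' Set.Ici 0 := by
      ext u; simp [hS, Set.mem_Icc, and_assoc]
    rw [this]
    exact isClosed_Icc.inter (isClosed_Ici.preimage hdiff.continuous)
  set s := sSup S with hs
  have hsS : s ∈ S := hSclosed.csSup_mem hSne hSbdd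
  have hs0 : 0 ≤ s := hsS.1.1
  have hst : s ≤ t := hsS.1.2
  have hgs : 0 ≤ g s := hsS.2
  -- g is nonpositive on (s, t], so deriv g ≥ 0 there
  have hlt : ∀ u ∈ Set.Ioo s t, g u ≤ 0 := by
    intro u hu
    by_contra hgu
    push_neg at hgu
    have : u ∈ S := ⟨⟨hs0.trans hu.1.le, hu.2.le⟩, hgu.le⟩
    exact absurd (le_csSup hSbdd this) (not_le.mpr hu.1)
  have hmono : MonotoneOn g (Set.Icc s t) := by
    apply monotoneOn_of_deriv_nonneg (convex_Icc s t) hdiff.continuous.continuousOn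
    · exact fun u _ => (hdiff u).differentiableWithinAt
    · intro u hu
      rw [interior_Icc] at hu
      exact hbar u (hs0.trans hu.1.le) (hlt u hu)
  have hsne : s < t := by
    rcases lt_or_eq_of_le hst with h | h
    · exact h
    · exact absurd hgs (not_le.mpr (h ▸ hneg))
  have := hmono ⟨le_refl s, hst⟩ ⟨hst, le_refl t⟩ hst
  linarith
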